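/- Let q = f ⊕ V be a Z₂-grading of a Lie algebra q, i.e. [f,f] ⊆ f, [f,V] ⊆ V, and [V,V] ⊆ f. Then for the family of modified brackets [·,·]_(s) defined by φ_s (identity on f, multiplication by s on V), one has [·,·]_(s) = [·,·]_(-s), and for any nonzero s, s' with 2t² = s² + (s')², the brackets satisfy [·,·]_(s) + [·,·]_(s') = 2[·,·]_(t). In particular the brackets [·,·]_(s) are pairwise compatible (every k-linear combination that is a pencil member is again a Lie bracket). -/

import Mathlib

/-!
Write `P`, `Q` for the projections onto `f` and `V`. For a `ℤ₂`-grading,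
`[x,y]_(s) = B₀(x,y) + s² B₁(x,y)` with `B₀(x,y) = [Px,Py] + [Px,Qy] + [Qx,Py]` and
`B₁(x,y) = [Qx,Qy]`. So `[·,·]_(s)` depends on `s` only through `s²`, which gives the first two
claims, and every linear combination of the brackets is of the form `c B₀ + d B₁`
(`gradedBracket c d` below). Split the Jacobi expression of `c B₀ + d B₁` according to how many
of its three arguments lie in `V`: by the grading, each piece is `c²` (zero or one argument in
`V`) or `cd` (two or three) times the corresponding piece of the Jacobi expression of `q`, which
vanishes.
-/

namespace PoissonLie

variable {k : Type*} [Field k] [CharZero k] [IsAlgClosed k]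
variable {q : Type*} [LieRing q] [LieAlgebra k q]

/-- The linear map `φ_s : q → q`, identity on `f` and `s · id` on `V`. -/
noncomputable def phiQ (f V : Submodule k q) (h : IsCompl f V) (s : k) : q →ₗ[k] q :=
  (f.subtype ∘ₗ f.linearProjOfIsCompl V h) + s • (V.subtype ∘ₗ V.linearProjOfIsCompl f h.symm)

/-- The modified bracket `[x,y]_(s) = φ_s⁻¹ [φ_s x, φ_s y]`. -/
noncomputable def sBracket (f V : Submodule k q) (h : IsCompl f V) (s : k) (x y : q) : q :=
  phiQ f V h s⁻¹ ⁅phiQ f V h s x, phiQ f V h s y⁆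

open Submodule

section GradedBracket

variable {R L : Type*} [CommRing R] [LieRing L] [LieAlgebra R L]

noncomputable def gradedBracket (f V : Submodule R L) (h : IsCompl f V) (c d : R) (u v : L) : L :=
  let P := f.projection V h
  let Q := V.projection f h.symm
  c • (⁅P u, P v⁆ + ⁅P u, Q v⁆ + ⁅Q u, P v⁆) + d • ⁅Q u, Q v⁆

variable (f V : Submodule R L) (h : IsCompl f V)

theorem gradedBracket_add (c d c' d' : R) (u v : L) :
    gradedBracket f V h c d u v + gradedBracket f V h c' d' u v =
      gradedBracket f V h (c + c') (d + d') u v := by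
  simp only [gradedBracket]
  module

theorem smul_gradedBracket (a c d : R) (u v : L) :
    a • gradedBracket f V h c d u v = gradedBracket f V h (a * c) (a * d) u v := by
  simp only [gradedBracket]
  module

end GradedBracket

section Z2Grading

variable {R L : Type*} [CommRing R] [LieRing L] [LieAlgebra R L]
variable (f : LieSubalgebra R L) (V : Submodule R L) (h : IsCompl f.toSubmodule V)

theorem lie_projection_projection_mem_left (u v : L) :
    ⁅f.toSubmodule.projection V h u, f.toSubmodule.projection V h v⁆ ∈ f :=
  f.lie_mem (projection_apply_mem h u) (projection_apply_mem h v)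

theorem lie_projection_projection_mem_right (hVV : ∀ v ∈ V, ∀ w ∈ V, ⁅v, w⁆ ∈ f)
    (u v : L) :
    ⁅V.projection f.toSubmodule h.symm u, V.projection f.toSubmodule h.symm v⁆ ∈ f :=
  hVV _ (projection_apply_mem h.symm u) _ (projection_apply_mem h.symm v)

theorem lie_projection_left_projection_right_mem (hfV : ∀ a ∈ f, ∀ v ∈ V, ⁅a, v⁆ ∈ V)
    (u v : L) : ⁅f.toSubmodule.projection V h u, V.projection f.toSubmodule h.symm v⁆ ∈ V :=
  hfV _ (projection_apply_mem h u) _ (projection_apply_mem h.symm v)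

theorem lie_projection_right_projection_left_mem (hfV : ∀ a ∈ f, ∀ v ∈ V, ⁅a, v⁆ ∈ V)
    (u v : L) :
    ⁅V.projection f.toSubmodule h.symm u, f.toSubmodule.projection V h v⁆ ∈ V := by
  rw [← lie_skew]
  exact V.neg_mem (lie_projection_left_projection_right_mem f V h hfV v u)

theorem gradedBracket_jacobi (hfV : ∀ a ∈ f, ∀ v ∈ V, ⁅a, v⁆ ∈ V)
    (hVV : ∀ v ∈ V, ∀ w ∈ V, ⁅v, w⁆ ∈ f) (c d : R) (x y z : L) :
    let B := gradedBracket f.toSubmodule V h c d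
    B x (B y z) = B (B x y) z + B y (B x z) := by
  intro B
  have hPP := lie_projection_projection_mem_left f V h
  have hQQ := lie_projection_projection_mem_right f V h hVV
  have hPQ := lie_projection_left_projection_right_mem f V h hfV
  have hQP := lie_projection_right_projection_left_mem f V h hfV
  simp only [B, gradedBracket, map_add, map_smul, lie_add, add_lie, lie_smul, smul_lie,
    projection_apply_of_mem_left h (hPP _ _), projection_apply_of_mem_right h.symm (hPP _ _),
    projection_apply_of_mem_left h (hQQ _ _), projection_apply_of_mem_right h.symm (hQQ _ _),
    projection_apply_of_mem_left h.symm (hPQ _ _), projection_apply_of_mem_right h (hPQ _ _),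
    projection_apply_of_mem_left h.symm (hQP _ _), projection_apply_of_mem_right h (hQP _ _),
    smul_zero, add_zero, zero_add, smul_add, smul_smul, lie_lie]
  module

end Z2Grading

section ModifiedBracket

variable {K L : Type*} [Field K] [LieRing L] [LieAlgebra K L]

theorem phiQ_apply (f V : Submodule K L) (h : IsCompl f V) (s : K) (x : L) :
    phiQ f V h s x = f.projection V h x + s • V.projection f h.symm x :=
  rfl

theorem phiQ_add_of_mem (f V : Submodule K L) (h : IsCompl f V) (s : K) {a v : L}
    (ha : a ∈ f) (hv : v ∈ V) : phiQ f V h s (a + v) = a + s • v := by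
  rw [phiQ_apply, map_add, map_add, projection_apply_of_mem_left h ha,
    projection_apply_of_mem_right h hv, projection_apply_of_mem_left h.symm hv,
    projection_apply_of_mem_right h.symm ha, add_zero, zero_add]

theorem sBracket_eq_gradedBracket (f : LieSubalgebra K L) (V : Submodule K L)
    (h : IsCompl f.toSubmodule V) (hfV : ∀ a ∈ f, ∀ v ∈ V, ⁅a, v⁆ ∈ V)
    (hVV : ∀ v ∈ V, ∀ w ∈ V, ⁅v, w⁆ ∈ f) {s : K} (hs : s ≠ 0) (x y : L) :
    sBracket f.toSubmodule V h s x y = gradedBracket f.toSubmodule V h 1 (s ^ 2) x y := by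
  set P := f.toSubmodule.projection V h
  set Q := V.projection f.toSubmodule h.symm
  have hsplit : ⁅phiQ f.toSubmodule V h s x, phiQ f.toSubmodule V h s y⁆ =
      (⁅P x, P y⁆ + s ^ 2 • ⁅Q x, Q y⁆) + s • (⁅P x, Q y⁆ + ⁅Q x, P y⁆) := by
    simp only [phiQ_apply, lie_add, add_lie, lie_smul, smul_lie]
    module
  have hf : ⁅P x, P y⁆ + s ^ 2 • ⁅Q x, Q y⁆ ∈ f :=
    f.add_mem (lie_projection_projection_mem_left f V h x y)
      (f.smul_mem _ (lie_projection_projection_mem_right f V h hVV x y))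
  have hV : s • (⁅P x, Q y⁆ + ⁅Q x, P y⁆) ∈ V :=
    V.smul_mem _ (V.add_mem (lie_projection_left_projection_right_mem f V h hfV x y)
      (lie_projection_right_projection_left_mem f V h hfV x y))
  rw [sBracket, hsplit, phiQ_add_of_mem _ _ h _ hf hV, smul_smul, inv_mul_cancel₀ hs, one_smul,
    gradedBracket]
  module

end ModifiedBracket

theorem sBracket_Z2_compatible_general
    (f : LieSubalgebra k q) (V : Submodule k q)
    (h : IsCompl f.toSubmodule V)
    (hfV : ∀ a ∈ f, ∀ v ∈ V, ⁅a, v⁆ ∈ V)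
    (hVV : ∀ v ∈ V, ∀ w ∈ V, ⁅v, w⁆ ∈ f) :
    -- `[·,·]_(s) = [·,·]_(-s)`
    (∀ s : k, s ≠ 0 → ∀ x y : q,
        sBracket f.toSubmodule V h s x y = sBracket f.toSubmodule V h (-s) x y) ∧
    -- the pencil identity `[·,·]_(s) + [·,·]_(s') = 2 [·,·]_(t)` when `2t² = s² + s'²`
    (∀ s s' t : k, s ≠ 0 → s' ≠ 0 → t ≠ 0 → 2 * t ^ 2 = s ^ 2 + s' ^ 2 →
      ∀ x y : q,
        sBracket f.toSubmodule V h s x y + sBracket f.toSubmodule V h s' x y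
          = (2 : k) • sBracket f.toSubmodule V h t x y) ∧
    -- pairwise compatibility: every linear combination is again a Lie bracket (Jacobi identity)
    (∀ s s' : k, s ≠ 0 → s' ≠ 0 → ∀ a b : k,
      ∀ x y z : q,
        (let br : q → q → q := fun u v =>
            a • sBracket f.toSubmodule V h s u v + b • sBracket f.toSubmodule V h s' u v
         br x (br y z) = br (br x y) z + br y (br x z))) := by
  have hB {s : k} (hs : s ≠ 0) := sBracket_eq_gradedBracket f V h hfV hVV hs
  refine ⟨fun s hs x y => ?_, fun s s' t hs hs' ht hst x y => ?_,
    fun s s' hs hs' a b x y z => ?_⟩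
  · rw [hB hs, hB (neg_ne_zero.mpr hs), neg_sq]
  · rw [hB hs, hB hs', hB ht, gradedBracket_add, smul_gradedBracket, hst, mul_one,
      one_add_one_eq_two]
  · intro br
    have hbr : br = gradedBracket f.toSubmodule V h (a + b) (a * s ^ 2 + b * s' ^ 2) := by
      ext u v
      simp only [br, hB hs, hB hs', smul_gradedBracket, gradedBracket_add, mul_one]
    rw [hbr]
    exact gradedBracket_jacobi f V h hfV hVV _ _ x y z

/-- for a `ℤ₂`-grading `q = f ⊕ V` (i.e. `[f,f] ⊆ f`, `[f,V] ⊆ V`,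
`[V,V] ⊆ f`), the modified brackets satisfy `[·,·]_(s) = [·,·]_(-s)`, and
`[·,·]_(s) + [·,·]_(s') = 2·[·,·]_(t)` whenever `2t² = s² + s'²`; in particular the brackets
are pairwise compatible: every linear combination `a·[·,·]_(s) + b·[·,·]_(s')` satisfies the
Jacobi identity. -/
theorem sBracket_Z2_compatible
    [FiniteDimensional k q]
    (f : LieSubalgebra k q) (V : Submodule k q)
    (h : IsCompl f.toSubmodule V)
    (hfV : ∀ a ∈ f, ∀ v ∈ V, ⁅a, v⁆ ∈ V)
    (hVV : ∀ v ∈ V, ∀ w ∈ V, ⁅v, w⁆ ∈ f) :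
    -- `[·,·]_(s) = [·,·]_(-s)`
    (∀ s : k, s ≠ 0 → ∀ x y : q,
        sBracket f.toSubmodule V h s x y = sBracket f.toSubmodule V h (-s) x y) ∧
    -- the pencil identity `[·,·]_(s) + [·,·]_(s') = 2 [·,·]_(t)` when `2t² = s² + s'²`
    (∀ s s' t : k, s ≠ 0 → s' ≠ 0 → t ≠ 0 → 2 * t ^ 2 = s ^ 2 + s' ^ 2 →
      ∀ x y : q,
        sBracket f.toSubmodule V h s x y + sBracket f.toSubmodule V h s' x y
          = (2 : k) • sBracket f.toSubmodule V h t x y) ∧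
    -- pairwise compatibility: every linear combination is again a Lie bracket (Jacobi identity)
    (∀ s s' : k, s ≠ 0 → s' ≠ 0 → ∀ a b : k,
      ∀ x y z : q,
        (let br : q → q → q := fun u v =>
            a • sBracket f.toSubmodule V h s u v + b • sBracket f.toSubmodule V h s' u v
         br x (br y z) = br (br x y) z + br y (br x z))) :=
  sBracket_Z2_compatible_general f V h hfV hVV

end PoissonLie
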